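/- Let p : (X̃, x̃₀) → (X, x₀) be a semicovering map with X̃ path connected. Then the fundamental group π₁(X, x₀) acts on the fiber Y = p⁻¹(x₀) by [α]·x̃ = α̃(1), where α̃ is the unique lift of the loop α starting at x̃, and the stabilizer of x̃₀ under this action equals p₊(π₁(X̃, x̃₀)). Consequently |Y| = [π₁(X, x₀) : p₊(π₁(X̃, x̃₀))]. -/

import Mathlib

/-!
Lifts of the paths `F (s, ·)` of a homotopy `F` rel endpoints, all starting at one point, assemble
to a continuous map: a local homeomorphism lifts a homotopy continuously near any one of these
paths (`IsLocalHomeomorph.exists_lift_nhds`), and unique path lifting identifies that local lift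
with the pointwise one. The endpoints of the lifts then form a lift of a constant path, so they
are constant. Hence the endpoint of a lift depends only on the homotopy class of the path, which
gives an action of `π₁(X, x₀)` on the fibre. A loop fixes `x'₀` exactly when its lift is a loop,
so the stabilizer is `p₊ π₁(X', x'₀)`; path connectedness of `X'` makes the action transitive,
and orbit–stabilizer gives the cardinality.
-/

universe u_1 u_2
open unitInterval

def PathLifting {X' X : Type*} [TopologicalSpace X'] [TopologicalSpace X]
    (p : X' → X) : Prop :=
  ∀ (f : C(I, X)) (x'₀ : X'), p x'₀ = f 0 →
    ∃ g : C(I, X'), (∀ t, p (g t) = f t) ∧ g 0 = x'₀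

def UniquePathLifting {X' X : Type*} [TopologicalSpace X'] [TopologicalSpace X]
    (p : X' → X) : Prop :=
  ∀ g₁ g₂ : C(I, X'), (∀ t, p (g₁ t) = p (g₂ t)) → g₁ 0 = g₂ 0 → g₁ = g₂

attribute [local instance] Path.Homotopic.setoid

variable {E X A : Type*} [TopologicalSpace E] [TopologicalSpace X] [TopologicalSpace A]
  {p : E → X}

/-- `IsLocalHomeomorph.continuous_lift` with unique path lifting in place of separatedness. -/
theorem IsLocalHomeomorph.continuous_lift_of_uniquePathLifting (homeo : IsLocalHomeomorph p)
    (hupl : UniquePathLifting p) (f : C(I × A, X)) {g : I × A → E} (g_lifts : p ∘ g = f)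
    (cont_0 : Continuous (g ⟨0, ·⟩)) (cont_A : ∀ a, Continuous (g ⟨·, a⟩)) : Continuous g := by
  rw [continuous_iff_continuousAt]
  rintro ⟨t, a⟩
  obtain ⟨N, haN, g', cont_g', g'_lifts, g'_0, -⟩ :=
    homeo.exists_lift_nhds g_lifts cont_0 a (cont_A a)
  refine (cont_g'.congr fun ⟨t, a'⟩ ⟨_, ha'⟩ ↦ ?_).continuousAt
    (prod_mem_nhds Filter.univ_mem haN)
  have := hupl ⟨(g ⟨·, a'⟩), cont_A a'⟩
    ⟨(g' ⟨·, a'⟩), cont_g'.comp_continuous (.prodMk_left a') fun _ ↦ ⟨⟨⟩, ha'⟩⟩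
    (fun s ↦ congr_fun (g_lifts.trans g'_lifts.symm) (s, a')) (g'_0 a').symm
  exact congr($this t)

/-- Lifting of endpoint-preserving homotopies follows from these three properties, see
`IsSemicoveringMap.apply_one_eq_of_homotopic`. -/
structure IsSemicoveringMap (p : E → X) : Prop where
  isLocalHomeomorph : IsLocalHomeomorph p
  pathLifting : PathLifting p
  uniquePathLifting : UniquePathLifting p

namespace IsSemicoveringMap

theorem eq_of_lifts (sc : IsSemicoveringMap p) {Γ₁ Γ₂ : C(I, E)} {γ : I → X}
    (h₁ : ∀ t, p (Γ₁ t) = γ t) (h₂ : ∀ t, p (Γ₂ t) = γ t) (h₀ : Γ₁ 0 = Γ₂ 0) : Γ₁ = Γ₂ :=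
  sc.uniquePathLifting Γ₁ Γ₂ (fun t ↦ (h₁ t).trans (h₂ t).symm) h₀

theorem apply_one_eq_of_homotopic (sc : IsSemicoveringMap p) {x y : X} {α β : Path x y}
    (h : α.Homotopic β) {Γα Γβ : C(I, E)} (hα : ∀ t, p (Γα t) = α t) (hβ : ∀ t, p (Γβ t) = β t)
    (h₀ : Γα 0 = Γβ 0) : Γα 1 = Γβ 1 := by
  obtain ⟨F⟩ := h
  have hF₀ (s : I) : p (Γα 0) = F.curry s 0 := by simp [hα]
  choose Γ hΓ hΓ₀ using fun s ↦ sc.pathLifting (F.curry s) (Γα 0) (hF₀ s)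
  have hcont : Continuous fun ts : I × I ↦ Γ ts.2 ts.1 :=
    sc.isLocalHomeomorph.continuous_lift_of_uniquePathLifting sc.uniquePathLifting
      (F.toContinuousMap.comp .prodSwap) (funext fun ts ↦ hΓ ts.2 ts.1)
      (by simp_rw [hΓ₀]; exact continuous_const) fun s ↦ (Γ s).continuous
  have hend : ContinuousMap.mk (Γ · 1) (hcont.comp (.prodMk_right 1)) = .const I (Γ 0 1) :=
    sc.eq_of_lifts (γ := fun _ ↦ y) (fun s ↦ by simp [hΓ]) (fun _ ↦ by simp [hΓ]) rfl
  have h0 : Γα = Γ 0 := sc.eq_of_lifts hα (fun t ↦ by simp [hΓ]) (hΓ₀ 0).symm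
  have h1 : Γβ = Γ 1 := sc.eq_of_lifts hβ (fun t ↦ by simp [hΓ]) (h₀.symm.trans (hΓ₀ 1).symm)
  rw [h0, h1]
  exact (congr($hend 1) : Γ 1 1 = Γ 0 1).symm

theorem continuous (sc : IsSemicoveringMap p) : Continuous p :=
  sc.isLocalHomeomorph.continuous

theorem exists_path_lifts (sc : IsSemicoveringMap p) {x y : X} (α : Path x y) (e : p ⁻¹' {x}) :
    ∃ Γ : C(I, E), (∀ t, p (Γ t) = α t) ∧ Γ 0 = e :=
  sc.pathLifting α e ((e.2 : p e = x).trans α.source.symm)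

noncomputable def liftPath (sc : IsSemicoveringMap p) {x y : X} (α : Path x y) (e : p ⁻¹' {x}) :
    C(I, E) :=
  (sc.exists_path_lifts α e).choose

theorem liftPath_lifts (sc : IsSemicoveringMap p) {x y : X} (α : Path x y) (e : p ⁻¹' {x}) :
    ∀ t, p (sc.liftPath α e t) = α t :=
  (sc.exists_path_lifts α e).choose_spec.1

theorem liftPath_zero (sc : IsSemicoveringMap p) {x y : X} (α : Path x y) (e : p ⁻¹' {x}) :
    sc.liftPath α e 0 = e :=
  (sc.exists_path_lifts α e).choose_spec.2

noncomputable def monodromy (sc : IsSemicoveringMap p) {x y : X}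
    (γ : Path.Homotopic.Quotient x y) (e : p ⁻¹' {x}) : p ⁻¹' {y} :=
  Quotient.lift
    (fun α : Path x y ↦
      (⟨sc.liftPath α e 1, (sc.liftPath_lifts α e 1).trans α.target⟩ : p ⁻¹' {y}))
    (fun α β h ↦ Subtype.ext <| sc.apply_one_eq_of_homotopic h (sc.liftPath_lifts α e)
      (sc.liftPath_lifts β e) ((sc.liftPath_zero α e).trans (sc.liftPath_zero β e).symm))
    γ

theorem monodromy_mk (sc : IsSemicoveringMap p) {x y : X} (α : Path x y) (e : p ⁻¹' {x})
    {Γ : C(I, E)} (hΓ : ∀ t, p (Γ t) = α t) (hΓ₀ : Γ 0 = e) :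
    (sc.monodromy ⟦α⟧ e : E) = Γ 1 :=
  congr($(sc.eq_of_lifts (sc.liftPath_lifts α e) hΓ ((sc.liftPath_zero α e).trans hΓ₀.symm)) 1)

theorem exists_path_lifts_to_monodromy (sc : IsSemicoveringMap p) {x y : X} (α : Path x y)
    (e : p ⁻¹' {x}) : ∃ Γ : Path (e : E) (sc.monodromy ⟦α⟧ e), ∀ t, p (Γ t) = α t :=
  ⟨⟨sc.liftPath α e, sc.liftPath_zero α e, rfl⟩, sc.liftPath_lifts α e⟩

theorem monodromy_refl (sc : IsSemicoveringMap p) {x : X} (e : p ⁻¹' {x}) :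
    sc.monodromy (.refl x) e = e :=
  Subtype.ext <| sc.monodromy_mk (.refl x) e (Γ := .const I e) (fun _ ↦ e.2) rfl

theorem monodromy_trans_apply (sc : IsSemicoveringMap p) {x y z : X}
    (γ : Path.Homotopic.Quotient x y) (γ' : Path.Homotopic.Quotient y z) (e : p ⁻¹' {x}) :
    sc.monodromy (γ.trans γ') e = sc.monodromy γ' (sc.monodromy γ e) := by
  induction γ with | mk α =>
  induction γ' with | mk β =>
  obtain ⟨Γ, hΓ⟩ := sc.exists_path_lifts_to_monodromy α e
  obtain ⟨Γ', hΓ'⟩ := sc.exists_path_lifts_to_monodromy β (sc.monodromy ⟦α⟧ e)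
  refine Subtype.ext <|
    (sc.monodromy_mk (α.trans β) e (Γ := Γ.trans Γ') (fun t ↦ ?_) (by simp)).trans (by simp)
  simp only [ContinuousMap.coe_coe, Path.trans_apply]
  split_ifs
  exacts [hΓ _, hΓ' _]

theorem monodromy_eq_iff (sc : IsSemicoveringMap p) {x y : X} (γ : Path.Homotopic.Quotient x y)
    {e e' : E} (he : p e = x) (he' : p e' = y) :
    sc.monodromy γ ⟨e, he⟩ = ⟨e', he'⟩ ↔
      ∃ Γ : Path e e', γ = ⟦(Γ.map sc.continuous).cast he.symm he'.symm⟧ := by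
  constructor
  · induction γ with | mk α =>
    intro h
    obtain ⟨Γ, hΓ⟩ := sc.exists_path_lifts_to_monodromy α ⟨e, he⟩
    refine ⟨Γ.cast rfl (congr($h.symm)), congrArg _ (Path.ext (funext fun t ↦ (hΓ t).symm))⟩
  · rintro ⟨Γ, rfl⟩
    exact Subtype.ext ((sc.monodromy_mk _ _ (Γ := Γ) (fun _ ↦ rfl) Γ.source).trans Γ.target)

theorem exists_monodromy_eq [PathConnectedSpace E] (sc : IsSemicoveringMap p) {x y : X}
    (e : p ⁻¹' {x}) (e' : p ⁻¹' {y}) : ∃ γ : Path.Homotopic.Quotient x y, sc.monodromy γ e = e' :=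
  ⟨_, (sc.monodromy_eq_iff _ e.2 e'.2).2 ⟨PathConnectedSpace.somePath _ _, rfl⟩⟩

@[reducible] noncomputable def fundamentalGroupMulAction (sc : IsSemicoveringMap p) (x : X) :
    MulAction (FundamentalGroup X x) (p ⁻¹' {x}) where
  smul := sc.monodromy
  mul_smul _ _ _ := sc.monodromy_trans_apply ..
  one_smul := sc.monodromy_refl

noncomputable def monodromyPerm (sc : IsSemicoveringMap p) (x : X) :
    FundamentalGroup X x →* Equiv.Perm (p ⁻¹' {x}) :=
  letI := sc.fundamentalGroupMulAction x
  MulAction.toPermHom _ _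

end IsSemicoveringMap

/-- for a semicovering `p : (X', x'₀) → (X, x₀)` with `X'` path
connected, the fundamental group `π₁(X, x₀)` acts on the fiber `Y = p⁻¹(x₀)`
by `[α] · x' = α'(1)` where `α'` is the unique lift of `α` starting at `x'`;
the stabilizer of `x'₀` is `p₊(π₁(X', x'₀))` (formalized as the subgroup `H`
of classes of loops of the form `p ∘ α'`), and `|Y| = [π₁(X, x₀) : H]`. -/
theorem stmt_12 {X' : Type u_1} {X : Type u_2} [TopologicalSpace X'] [TopologicalSpace X]
    [PathConnectedSpace X'] (p : X' → X) (hp : IsLocalHomeomorph p)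
    (hpl : PathLifting p) (hupl : UniquePathLifting p)
    (x'₀ : X') (x₀ : X) (hx'₀ : p x'₀ = x₀)
    (H : Subgroup (FundamentalGroup X x₀))
    (hH : ∀ g : FundamentalGroup X x₀, g ∈ H ↔
      ∃ α' : Path x'₀ x'₀, g = FundamentalGroup.fromPath (X := TopCat.of X)
        ⟦(α'.map hp.continuous).cast hx'₀.symm hx'₀.symm⟧) :
    ∃ act : FundamentalGroup X x₀ →* Equiv.Perm (p ⁻¹' {x₀}),
      (∀ (α : Path x₀ x₀) (x' : p ⁻¹' {x₀}) (α' : C(unitInterval, X')),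
        (∀ t, p (α' t) = α t) → α' 0 = (x' : X') →
          ((act (FundamentalGroup.fromPath (X := TopCat.of X) ⟦α⟧) x' : X') = α' 1)) ∧
      (∀ g : FundamentalGroup X x₀,
        act g ⟨x'₀, by simpa using hx'₀⟩ = ⟨x'₀, by simpa using hx'₀⟩ ↔ g ∈ H) ∧
      Cardinal.lift.{u_2} (Cardinal.mk (p ⁻¹' {x₀})) =
        Cardinal.lift.{u_1} (Cardinal.mk (FundamentalGroup X x₀ ⧸ H)) := by
  have sc : IsSemicoveringMap p := ⟨hp, hpl, hupl⟩
  let := sc.fundamentalGroupMulAction x₀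
  have hstab : ∀ g, sc.monodromyPerm x₀ g ⟨x'₀, hx'₀⟩ = ⟨x'₀, hx'₀⟩ ↔ g ∈ H := fun g ↦
    (sc.monodromy_eq_iff g hx'₀ hx'₀).trans (hH g).symm
  have : MulAction.IsPretransitive (FundamentalGroup X x₀) (p ⁻¹' {x₀}) :=
    ⟨fun e e' ↦ sc.exists_monodromy_eq e e'⟩
  have hH_eq : H = MulAction.stabilizer _ (⟨x'₀, hx'₀⟩ : p ⁻¹' {x₀}) := by
    ext g; exact (hstab g).symm
  refine ⟨sc.monodromyPerm x₀, fun α x' α' ↦ sc.monodromy_mk α x', hstab, ?_⟩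
  rw [hH_eq]
  exact Cardinal.lift_mk_eq'.2 ⟨(Equiv.Set.univ _).symm.trans <|
    (Equiv.setCongr (MulAction.orbit_eq_univ _ _).symm).trans
      (MulAction.orbitEquivQuotientStabilizer _ _)⟩
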